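/- arXiv:2112.10250 — 4 statements merged into one kernel-verified Lean document; each statement's English description precedes it below -/
import Mathlib

section
/- If $v_1 v_2 \ldots v_k$ is a directed path in a digraph $G$ without self-loops, and two non-endpoint vertices $v_a$ and $v_b$ (with $1 < a < b < k$) have the same type (i.e., the same set of in-neighbors and the same set of out-neighbors), then $b \neq a+1$, there is an edge from $v_a$ to $v_{b+1}$, and there is an edge from $v_b$ to $v_{a+1}$; hence $v_1 \ldots v_a v_{b+1} \ldots v_k$ is a directed path and $v_{a+1} \ldots v_b v_{a+1}$ is a directed cycle, and together they cover exactly the vertex set of the original path. -/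
variable {V : Type*}

/-- Two vertices have the same type: identical in-neighbors and out-neighbors. -/
def SameType (A : V → V → Prop) (u v : V) : Prop :=
  (∀ w, A w u ↔ A w v) ∧ (∀ w, A u w ↔ A v w)

/-- A directed path: distinct vertices with consecutive edges. -/
def IsDiPath (A : V → V → Prop) (l : List V) : Prop :=
  l.Nodup ∧ l.Chain' A

/-- A directed cycle: distinct vertices, consecutive edges, an edge from last to head. -/
def IsDiCycle (A : V → V → Prop) (l : List V) : Prop :=
  2 ≤ l.length ∧ l.Nodup ∧ l.Chain' A ∧
    ∃ x y, l.head? = some x ∧ l.getLast? = some y ∧ A y x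

/-!
Since `v a → v (a+1)` and `v b → v (b+1)` are edges and `v a`, `v b` have the same
out-neighbours, `v a → v (b+1)` and `v b → v (a+1)` are edges too; the first splices the path `v 0 … v a` onto `v (b+1) … v (k-1)`, the second closes `v (a+1) … v b` into
a cycle. If `b = a + 1`, the edge `v b → v (a+1)` would be a loop.
-/

theorem List.map_range_eq_map_range' (v : ℕ → V) (s n : ℕ) :
    (List.range n).map (fun i => v (s + i)) = (List.range' s n).map v := by
  rw [List.range'_eq_map_range, List.map_map]
  rfl

theorem IsDiPath.append {A : V → V → Prop} {l₁ l₂ : List V} (h₁ : IsDiPath A l₁)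
    (h₂ : IsDiPath A l₂) (hdisj : l₁.Disjoint l₂)
    (hjoin : ∀ x ∈ l₁.getLast?, ∀ y ∈ l₂.head?, A x y) :
    IsDiPath A (l₁ ++ l₂) :=
  ⟨List.nodup_append'.2 ⟨h₁.1, h₂.1, hdisj⟩, List.isChain_append.2 ⟨h₁.2, h₂.2, hjoin⟩⟩

section Segments

variable {A : V → V → Prop} {v : ℕ → V} {k : ℕ}

theorem isDiPath_map_range' (hinj : ∀ i j, i < k → j < k → v i = v j → i = j)
    (hedge : ∀ i, i + 1 < k → A (v i) (v (i + 1))) {s n : ℕ} (hsn : s + n ≤ k) :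
    IsDiPath A ((List.range' s n).map v) := by
  refine ⟨List.Nodup.map_on (fun i hi j hj => ?_) List.nodup_range', List.isChain_map v |>.2 ?_⟩
  · rw [List.mem_range'_1] at hi hj
    exact hinj i j (by omega) (by omega)
  · refine (List.isChain_range' s n 1).imp_of_mem_imp fun i j _ hj hij => ?_
    rw [List.mem_range'_1] at hj
    subst hij
    exact hedge i (by omega)

theorem disjoint_map_range' (hinj : ∀ i j, i < k → j < k → v i = v j → i = j)
    {s m t n : ℕ} (hst : s + m ≤ t) (htn : t + n ≤ k) :
    ((List.range' s m).map v).Disjoint ((List.range' t n).map v) := by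
  simp only [List.disjoint_left, List.mem_map, List.mem_range'_1]
  rintro _ ⟨i, hi, rfl⟩ ⟨j, hj, hji⟩
  have := hinj j i (by omega) (by omega) hji
  omega

end Segments

theorem stmt0_general [DecidableEq V] (A : V → V → Prop) (hirr : ∀ x, ¬ A x x)
    (k a b : ℕ) (v : ℕ → V)
    (hinj : ∀ i j, i < k → j < k → v i = v j → i = j)
    (hedge : ∀ i, i + 1 < k → A (v i) (v (i + 1)))
    (hab : a < b) (hb : b < k - 1)
    (htype : SameType A (v a) (v b)) :
    b ≠ a + 1 ∧ A (v a) (v (b + 1)) ∧ A (v b) (v (a + 1)) ∧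
    IsDiPath A ((List.range (a + 1)).map v ++
        (List.range (k - 1 - b)).map (fun i => v (b + 1 + i))) ∧
    IsDiCycle A ((List.range (b - a)).map (fun i => v (a + 1 + i))) ∧
    ((List.range (a + 1)).map v ++
        (List.range (k - 1 - b)).map (fun i => v (b + 1 + i))).toFinset ∪
      ((List.range (b - a)).map (fun i => v (a + 1 + i))).toFinset =
      ((List.range k).map v).toFinset := by
  have hout : ∀ w, A (v a) w ↔ A (v b) w := htype.2
  have hne : b ≠ a + 1 := by
    rintro rfl
    exact hirr _ ((hout _).1 (hedge a (by omega)))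
  have hsplice : A (v a) (v (b + 1)) := (hout _).2 (hedge b (by omega))
  have hclose : A (v b) (v (a + 1)) := (hout _).1 (hedge a (by omega))
  simp only [List.map_range_eq_map_range']
  simp only [List.range_eq_range']
  refine ⟨hne, hsplice, hclose, ?path, ?cycle, ?cover⟩
  case path =>
    refine (isDiPath_map_range' hinj hedge (by omega)).append
      (isDiPath_map_range' hinj hedge (by omega)) (disjoint_map_range' hinj (by omega) (by omega)) ?_
    simp [List.getLast?_range', List.head?_range', show k - 1 - b ≠ 0 by omega, hsplice]
  case cycle =>
    obtain ⟨hnodup, hchain⟩ := isDiPath_map_range' (s := a + 1) (n := b - a) hinj hedge (by omega)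
    refine ⟨by rw [List.length_map, List.length_range']; omega, hnodup, hchain, v (a + 1), v b, ?_, ?_, hclose⟩
    · simp [List.head?_range', show b - a ≠ 0 by omega]
    · simp [List.getLast?_range', show b - a ≠ 0 by omega, show a + 1 + (b - a) - 1 = b by omega]
  case cover =>
    rw [← List.toFinset_append, ← List.map_append, ← List.map_append]
    ext x
    simp only [List.mem_toFinset, List.mem_map, List.mem_append, List.mem_range'_1]
    exact exists_congr fun i => and_congr_left fun _ => by omega

theorem stmt0 [DecidableEq V] (A : V → V → Prop) (hirr : ∀ x, ¬ A x x)
    (k a b : ℕ) (v : ℕ → V)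
    (hinj : ∀ i j, i < k → j < k → v i = v j → i = j)
    (hedge : ∀ i, i + 1 < k → A (v i) (v (i + 1)))
    (ha : 0 < a) (hab : a < b) (hb : b < k - 1)
    (htype : SameType A (v a) (v b)) :
    b ≠ a + 1 ∧ A (v a) (v (b + 1)) ∧ A (v b) (v (a + 1)) ∧
    IsDiPath A ((List.range (a + 1)).map v ++
        (List.range (k - 1 - b)).map (fun i => v (b + 1 + i))) ∧
    IsDiCycle A ((List.range (b - a)).map (fun i => v (a + 1 + i))) ∧
    ((List.range (a + 1)).map v ++
        (List.range (k - 1 - b)).map (fun i => v (b + 1 + i))).toFinset ∪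
      ((List.range (b - a)).map (fun i => v (a + 1 + i))).toFinset =
      ((List.range k).map v).toFinset :=
  stmt0_general A hirr k a b v hinj hedge hab hb htype
end

section
/- In any instance of the kidney exchange problem with $\ell_p \le \ell_c$ on a digraph with $\theta$ vertex types, there exists an optimal solution (a collection of vertex-disjoint cycles of length at most $\ell_c$ and vertex-disjoint paths starting at altruistic vertices of length at most $\ell_p$, maximizing the number of covered non-altruistic vertices) in which every path and every cycle has length at most $\theta + 3$. -/
variable {V : Type*}

/-- A feasible path: a nonempty directed path starting at an altruistic vertex,
with at most `ℓp` edges. -/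
def FeasPath (A : V → V → Prop) (B : Finset V) (ℓp : ℕ) (l : List V) : Prop :=
  l ≠ [] ∧ l.Nodup ∧ l.Chain' A ∧ (∃ x, l.head? = some x ∧ x ∈ B) ∧
    l.length ≤ ℓp + 1

/-- A feasible cycle: a directed cycle with at most `ℓc` edges. -/
def FeasCycle (A : V → V → Prop) (ℓc : ℕ) (l : List V) : Prop :=
  2 ≤ l.length ∧ l.Nodup ∧ l.Chain' A ∧ l.length ≤ ℓc ∧
    ∃ x y, l.head? = some x ∧ l.getLast? = some y ∧ A y x

/-- A solution: a collection of vertex-disjoint feasible paths and cycles. -/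
def IsSolution [DecidableEq V] (A : V → V → Prop) (B : Finset V) (ℓp ℓc : ℕ)
    (S : Finset (List V)) : Prop :=
  (∀ l ∈ S, FeasPath A B ℓp l ∨ FeasCycle A ℓc l) ∧
    (∀ l ∈ S, ∀ l' ∈ S, l ≠ l' → ∀ x ∈ l, x ∉ l')

/-- The value of a solution: the number of covered non-altruistic vertices. -/
def solValue [DecidableEq V] (B : Finset V) (S : Finset (List V)) : ℕ :=
  ((S.biUnion List.toFinset).filter (· ∉ B)).card

/-!
Among the optimal solutions take one minimising the sum of the squared lengths of its members.
If a member had more than `θ + 1` vertices, two of them, `u` before `v` (and neither the start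
of a path), would have the same type by pigeonhole. As `u` and `v` have the same in-neighbours,
the segment from `u` up to just before `v` closes into a cycle, and what remains, rerouted into
`v`, is again a feasible path or cycle; irreflexivity makes both pieces proper, and `ℓp ≤ ℓc`
bounds a cycle cut out of a path. Replacing the member by the two pieces covers the same
vertices, so the solution stays optimal, but the sum of squares drops.
-/

theorem List.exists_eq_append_cons_append_cons_of_not_pairwise {α : Type*} {R : α → α → Prop} :
    ∀ {l : List α}, ¬ l.Pairwise R → ∃ p u m v s, l = p ++ u :: (m ++ v :: s) ∧ ¬ R u v
  | [], h => absurd List.Pairwise.nil h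
  | x :: t, h => by
    rw [List.pairwise_cons, not_and_or] at h
    rcases h with h | h
    · push Not at h
      obtain ⟨v, hv, hxv⟩ := h
      obtain ⟨m, s, rfl⟩ := List.append_of_mem hv
      exact ⟨[], x, m, v, s, rfl, hxv⟩
    · obtain ⟨p, u, m, v, s, rfl, huv⟩ := exists_eq_append_cons_append_cons_of_not_pairwise h
      exact ⟨x :: p, u, m, v, s, rfl, huv⟩

theorem List.exists_eq_append_cons_append_cons_of_card_lt {α Γ : Type*} [Fintype Γ] (f : α → Γ)
    {l : List α} (h : Fintype.card Γ < l.length) :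
    ∃ p u m v s, l = p ++ u :: (m ++ v :: s) ∧ f u = f v := by
  have hdup : ¬ (l.map f).Nodup := fun hnd =>
    (by simpa using hnd.length_le_card : l.length ≤ _).not_gt h
  rw [List.Nodup, List.pairwise_map] at hdup
  simpa using exists_eq_append_cons_append_cons_of_not_pairwise hdup

theorem List.append_cons_append_cons_perm {α : Type*} (x m s : List α) (u v : α) :
    ((x ++ v :: s) ++ u :: m).Perm (x ++ u :: (m ++ v :: s)) := by
  simpa using (List.perm_append_comm (l₁ := v :: s) (l₂ := u :: m)).append_left x

theorem List.Perm.subset_of_append_left {α : Type*} {l₁ l₂ l : List α}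
    (h : (l₁ ++ l₂).Perm l) : l₁ ⊆ l :=
  fun _ hx => h.subset (List.mem_append_left _ hx)

theorem List.Perm.subset_of_append_right {α : Type*} {l₁ l₂ l : List α}
    (h : (l₁ ++ l₂).Perm l) : l₂ ⊆ l :=
  fun _ hx => h.subset (List.mem_append_right _ hx)

section Digraph

variable {A : V → V → Prop} {u v : V}

theorem SameType.symm (h : SameType A u v) : SameType A v u :=
  ⟨fun w => (h.1 w).symm, fun w => (h.2 w).symm⟩

theorem SameType.not_adj (hirr : ∀ x, ¬ A x x) (h : SameType A u v) : ¬ A u v :=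
  fun huv => hirr v ((h.2 v).1 huv)

theorem SameType.isChain_append_cons (h : SameType A u v) {l r r' : List V}
    (hl : (l ++ u :: r).IsChain A) (hr' : (v :: r').IsChain A) : (l ++ v :: r').IsChain A := by
  rw [List.isChain_append] at hl ⊢
  exact ⟨hl.1, hr', fun x hx y hy => by
    simp only [List.head?_cons, Option.mem_some_iff] at hy
    exact hy ▸ (h.1 x).1 (hl.2.2 x hx u rfl)⟩

theorem feasCycle_iff {ℓc : ℕ} {l : List V} :
    FeasCycle A ℓc l ↔ 2 ≤ l.length ∧ l.Nodup ∧ l.length ≤ ℓc ∧ Cycle.Chain A (l : Cycle V) := by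
  rcases l with - | ⟨a, t⟩
  · simp [FeasCycle]
  rw [Cycle.chain_coe_cons, ← List.cons_append, List.isChain_append]
  simp only [FeasCycle, List.Chain']
  grind

theorem FeasCycle.append_comm {ℓc : ℕ} {l l' : List V} (h : FeasCycle A ℓc (l ++ l')) :
    FeasCycle A ℓc (l' ++ l) := by
  rw [feasCycle_iff] at h ⊢
  rw [Cycle.coe_eq_coe.2 List.isRotated_append, List.perm_append_comm.nodup_iff,
    List.length_append, add_comm] at h
  rwa [List.length_append]

/-- The closing edge of the cycle `u :: m` is the edge into `v` rerouted to `u`. -/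
theorem SameType.feasCycle (hirr : ∀ x, ¬ A x x) (h : SameType A u v) {ℓc : ℕ} {m r : List V}
    (hch : (u :: (m ++ v :: r)).IsChain A) (hnd : (u :: m).Nodup) (hlen : m.length < ℓc) :
    FeasCycle A ℓc (u :: m) := by
  have hch' : ((u :: m) ++ [v]).IsChain A := hch.prefix ⟨r, by simp⟩
  have hm : m ≠ [] := by
    rintro rfl
    exact h.not_adj hirr (List.isChain_pair.1 hch')
  refine feasCycle_iff.2 ⟨?_, hnd, by simpa using hlen, ?_⟩
  · simpa [Nat.one_le_iff_ne_zero] using hm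
  · rw [Cycle.chain_coe_cons, ← List.cons_append]
    exact h.symm.isChain_append_cons hch' (List.isChain_singleton u)

theorem FeasCycle.take_of_sameType (hirr : ∀ x, ¬ A x x) (h : SameType A u v) {ℓc : ℕ}
    {m r : List V} (hc : FeasCycle A ℓc (u :: (m ++ v :: r))) : FeasCycle A ℓc (u :: m) := by
  obtain ⟨-, hnd, hch, hlen, -⟩ := hc
  refine h.feasCycle hirr hch (hnd.sublist ((List.sublist_append_left m _).cons_cons u)) ?_
  simp only [List.length_cons, List.length_append] at hlen
  omega

theorem FeasCycle.split (hirr : ∀ x, ¬ A x x) (h : SameType A u v) {ℓc : ℕ} {x m s : List V}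
    (hc : FeasCycle A ℓc (x ++ u :: (m ++ v :: s))) :
    FeasCycle A ℓc (u :: m) ∧ FeasCycle A ℓc (v :: (s ++ x)) := by
  have hu : FeasCycle A ℓc (u :: (m ++ v :: (s ++ x))) := by simpa using hc.append_comm
  have hv : FeasCycle A ℓc (v :: (s ++ x ++ u :: m)) := by
    simpa using FeasCycle.append_comm (l := u :: m) hu
  exact ⟨hu.take_of_sameType hirr h, hv.take_of_sameType hirr h.symm⟩

theorem FeasPath.split (hirr : ∀ x, ¬ A x x) (h : SameType A u v) {B : Finset V} {ℓp ℓc : ℕ}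
    (hℓ : ℓp ≤ ℓc) {x m s : List V} (hx : x ≠ [])
    (hp : FeasPath A B ℓp (x ++ u :: (m ++ v :: s))) :
    FeasPath A B ℓp (x ++ v :: s) ∧ FeasCycle A ℓc (u :: m) := by
  obtain ⟨-, hnd, hch, ⟨b, hb, hbB⟩, hlen⟩ := hp
  have hnd' : ((x ++ v :: s) ++ u :: m).Nodup :=
    (List.append_cons_append_cons_perm x m s u v).nodup_iff.2 hnd
  have hxpos : 0 < x.length := List.length_pos_iff.2 hx
  simp only [List.length_append, List.length_cons] at hlen
  refine ⟨⟨by simp, hnd'.sublist (List.sublist_append_left _ _),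
      h.isChain_append_cons hch (hch.suffix ⟨x ++ u :: m, by simp⟩), ⟨b, ?_, hbB⟩, ?_⟩,
    h.feasCycle hirr (hch.suffix (List.suffix_append x _))
      (hnd'.sublist (List.sublist_append_right _ _)) (by omega)⟩
  · rwa [List.head?_append_of_ne_nil _ hx] at hb ⊢
  · simp only [List.length_append, List.length_cons]
    omega

section Feasible

variable {B : Finset V} {ℓp ℓc : ℕ}

theorem feasible_ne_nil {l : List V} (h : FeasPath A B ℓp l ∨ FeasCycle A ℓc l) : l ≠ [] := by
  rcases h with h | h
  · exact h.1
  · exact List.ne_nil_of_length_pos (by linarith [h.1])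

theorem feasible_nodup {l : List V} (h : FeasPath A B ℓp l ∨ FeasCycle A ℓc l) : l.Nodup := by
  rcases h with h | h
  exacts [h.2.1, h.2.1]

theorem exists_feasible_split {Γ : Type*} [Fintype Γ] (hirr : ∀ x, ¬ A x x) (hℓ : ℓp ≤ ℓc)
    (τ : V → Γ) (hτ : ∀ u v, τ u = τ v → SameType A u v) {l : List V}
    (hl : FeasPath A B ℓp l ∨ FeasCycle A ℓc l) (hlong : Fintype.card Γ + 1 < l.length) :
    ∃ l₁ l₂, (FeasPath A B ℓp l₁ ∨ FeasCycle A ℓc l₁) ∧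
      (FeasPath A B ℓp l₂ ∨ FeasCycle A ℓc l₂) ∧ (l₁ ++ l₂).Perm l := by
  rcases hl with hp | hc
  · obtain ⟨b, t, rfl⟩ := List.exists_cons_of_ne_nil hp.1
    obtain ⟨p, u, m, v, s, rfl, huv⟩ :=
      List.exists_eq_append_cons_append_cons_of_card_lt τ (l := t) (by simpa using hlong)
    obtain ⟨hp', hc'⟩ := FeasPath.split hirr (hτ u v huv) hℓ (x := b :: p) (by simp) hp
    exact ⟨_, _, Or.inl hp', Or.inr hc', List.append_cons_append_cons_perm _ _ _ _ _⟩
  · obtain ⟨x, u, m, v, s, rfl, huv⟩ :=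
      List.exists_eq_append_cons_append_cons_of_card_lt τ (l := l) (by omega)
    obtain ⟨hc₁, hc₂⟩ := hc.split hirr (hτ u v huv)
    exact ⟨_, _, Or.inr hc₁, Or.inr hc₂,
      by simpa using (List.perm_append_comm (l₁ := x) (l₂ := u :: (m ++ v :: s))).symm⟩

end Feasible

end Digraph

section Solutions

variable [DecidableEq V] {A : V → V → Prop} {B : Finset V} {ℓp ℓc : ℕ}

def IsOptimalSolution (A : V → V → Prop) (B : Finset V) (ℓp ℓc : ℕ) (S : Finset (List V)) :
    Prop :=
  IsSolution A B ℓp ℓc S ∧ ∀ S', IsSolution A B ℓp ℓc S' → solValue B S' ≤ solValue B S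

def sqLengthSum (S : Finset (List V)) : ℕ := ∑ l ∈ S, l.length ^ 2

theorem isSolution_empty : IsSolution A B ℓp ℓc ∅ := ⟨by simp, by simp⟩

theorem exists_isOptimalSolution [Fintype V] : ∃ S, IsOptimalSolution A B ℓp ℓc S := by
  let values := {n | ∃ S, IsSolution A B ℓp ℓc S ∧ solValue B S = n}
  have hbdd : BddAbove values := ⟨Fintype.card V, by
    rintro _ ⟨S, -, rfl⟩
    exact (Finset.card_filter_le _ _).trans (Finset.card_le_univ _)⟩
  obtain ⟨S, hS, hval⟩ := Nat.sSup_mem (s := values) ⟨0, ∅, isSolution_empty, rfl⟩ hbdd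
  exact ⟨S, hS, fun S' hS' => hval ▸ le_csSup hbdd ⟨S', hS', rfl⟩⟩

section Replace

variable {S : Finset (List V)} {l l₁ l₂ : List V}

theorem IsSolution.disjoint_of_subset (hS : IsSolution A B ℓp ℓc S) (hl : l ∈ S) {l' : List V}
    (hsub : l' ⊆ l) {c : List V} (hc : c ∈ S.erase l) : l'.Disjoint c :=
  List.disjoint_of_subset_left hsub
    (hS.2 l hl c (Finset.mem_of_mem_erase hc) (Finset.ne_of_mem_erase hc).symm)

theorem IsSolution.notMem_erase (hS : IsSolution A B ℓp ℓc S) (hl : l ∈ S) {l' : List V}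
    (hsub : l' ⊆ l) (hne : l' ≠ []) : l' ∉ S.erase l := fun hc => by
  obtain ⟨x, hx⟩ := List.exists_mem_of_ne_nil l' hne
  exact hS.disjoint_of_subset hl hsub hc hx hx

theorem IsSolution.disjoint_of_perm (hS : IsSolution A B ℓp ℓc S) (hl : l ∈ S)
    (hperm : (l₁ ++ l₂).Perm l) : l₁.Disjoint l₂ :=
  List.disjoint_of_nodup_append (hperm.nodup_iff.2 (feasible_nodup (hS.1 l hl)))

theorem solValue_replace (hl : l ∈ S) (hperm : (l₁ ++ l₂).Perm l) :
    solValue B (insert l₁ (insert l₂ (S.erase l))) = solValue B S := by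
  have h₁₂ : l₁.toFinset ∪ l₂.toFinset = l.toFinset := by
    rw [← List.toFinset_append, List.toFinset_eq_of_perm _ _ hperm]
  unfold solValue
  conv_rhs => rw [← Finset.insert_erase hl]
  rw [Finset.biUnion_insert, Finset.biUnion_insert, Finset.biUnion_insert, ← Finset.union_assoc,
    h₁₂]

theorem IsSolution.replace (hS : IsSolution A B ℓp ℓc S) (hl : l ∈ S)
    (h₁ : FeasPath A B ℓp l₁ ∨ FeasCycle A ℓc l₁) (h₂ : FeasPath A B ℓp l₂ ∨ FeasCycle A ℓc l₂)
    (hperm : (l₁ ++ l₂).Perm l) :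
    IsSolution A B ℓp ℓc (insert l₁ (insert l₂ (S.erase l))) := by
  have hdisj : (S : Set (List V)).Pairwise List.Disjoint := hS.2
  have : Std.Symm (α := List V) List.Disjoint := ⟨fun _ _ h => h.symm⟩
  refine ⟨?_, ?_⟩
  · intro l' hl'
    simp only [Finset.mem_insert] at hl'
    rcases hl' with rfl | rfl | hl'
    exacts [h₁, h₂, hS.1 _ (Finset.mem_of_mem_erase hl')]
  · change ((insert l₁ (insert l₂ (S.erase l)) : Finset _) : Set (List V)).Pairwise List.Disjoint
    rw [Finset.coe_insert, Finset.coe_insert, Set.pairwise_insert_of_symm,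
      Set.pairwise_insert_of_symm]
    refine ⟨⟨hdisj.mono (Finset.coe_subset.2 (Finset.erase_subset _ _)),
      fun c hc _ => hS.disjoint_of_subset hl hperm.subset_of_append_right hc⟩, ?_⟩
    rintro c (rfl | hc) _
    exacts [hS.disjoint_of_perm hl hperm, hS.disjoint_of_subset hl hperm.subset_of_append_left hc]

theorem sqLengthSum_replace_lt (hS : IsSolution A B ℓp ℓc S) (hl : l ∈ S)
    (hne₁ : l₁ ≠ []) (hne₂ : l₂ ≠ []) (hperm : (l₁ ++ l₂).Perm l) :
    sqLengthSum (insert l₁ (insert l₂ (S.erase l))) < sqLengthSum S := by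
  have hnot₂ : l₂ ∉ S.erase l := hS.notMem_erase hl hperm.subset_of_append_right hne₂
  have hnot₁ : l₁ ∉ insert l₂ (S.erase l) := by
    rw [Finset.mem_insert, not_or]
    refine ⟨fun h => ?_, hS.notMem_erase hl hperm.subset_of_append_left hne₁⟩
    obtain ⟨x, hx⟩ := List.exists_mem_of_ne_nil l₁ hne₁
    exact hS.disjoint_of_perm hl hperm hx (h ▸ hx)
  have h₁ := List.length_pos_iff.2 hne₁
  have h₂ := List.length_pos_iff.2 hne₂
  rw [sqLengthSum, sqLengthSum, Finset.sum_insert hnot₁, Finset.sum_insert hnot₂,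
    ← Finset.add_sum_erase S _ hl, ← hperm.length_eq, List.length_append]
  nlinarith

end Replace

theorem length_le_card_add_one_of_minimalFor {Γ : Type*} [Fintype Γ] (hirr : ∀ x, ¬ A x x)
    (hℓ : ℓp ≤ ℓc) (τ : V → Γ) (hτ : ∀ u v, τ u = τ v → SameType A u v) {S : Finset (List V)}
    (hS : MinimalFor (IsOptimalSolution A B ℓp ℓc) sqLengthSum S) {l : List V} (hl : l ∈ S) :
    l.length ≤ Fintype.card Γ + 1 := by
  obtain ⟨⟨hsol, hopt⟩, hmin⟩ := hS
  by_contra! hlong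
  obtain ⟨l₁, l₂, h₁, h₂, hperm⟩ := exists_feasible_split hirr hℓ τ hτ (hsol.1 l hl) hlong
  have hopt' : IsOptimalSolution A B ℓp ℓc (insert l₁ (insert l₂ (S.erase l))) :=
    ⟨hsol.replace hl h₁ h₂ hperm, fun S' hS' => solValue_replace hl hperm ▸ hopt S' hS'⟩
  have hlt := sqLengthSum_replace_lt hsol hl (feasible_ne_nil h₁) (feasible_ne_nil h₂) hperm
  exact hlt.not_ge (hmin hopt' hlt.le)

end Solutions

/-- When `ℓp ≤ ℓc`, there is an optimal solution in which every path and every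
cycle has length (number of edges) at most `θ + 3`, `θ` being the number of vertex types. -/
theorem stmt4 {Γ : Type*} [Fintype V] [DecidableEq V] [Fintype Γ]
    (A : V → V → Prop) (hirr : ∀ x, ¬ A x x) (B : Finset V)
    (ℓp ℓc θ : ℕ) (hℓ : ℓp ≤ ℓc)
    (τ : V → Γ) (hτ : ∀ u v, τ u = τ v ↔ SameType A u v)
    (hθ : Fintype.card Γ = θ) :
    ∃ S : Finset (List V), IsSolution A B ℓp ℓc S ∧
      (∀ S' : Finset (List V), IsSolution A B ℓp ℓc S' → solValue B S' ≤ solValue B S) ∧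
      ∀ l ∈ S, (FeasPath A B ℓp l → l.length - 1 ≤ θ + 3) ∧
        (FeasCycle A ℓc l → l.length ≤ θ + 3) := by
  obtain ⟨S, hS⟩ := exists_minimalFor_of_wellFoundedLT (IsOptimalSolution A B ℓp ℓc) sqLengthSum
    exists_isOptimalSolution
  refine ⟨S, hS.1.1, hS.1.2, fun l hl => ?_⟩
  have := length_le_card_add_one_of_minimalFor hirr hℓ τ (fun u v => (hτ u v).1) hS hl
  exact ⟨fun _ => by omega, fun _ => by omega⟩
end

section
/- Let $G$ be a digraph with vertex types indexed by $\Gamma$, where $n(\gamma)$ counts the vertices of type $\gamma$, and let $\mathcal{A}$ be the set of all realizable signatures (type-sequences of paths starting at altruistic vertices and of cycles, within the allowed length bounds when $\ell_p \le \ell_c$). Then the maximum number of non-altruistic vertices coverable by a disjoint collection of feasible paths and cycles equals the optimum of the integer program: maximize $\sum_{p \in \mathcal{A}} \lambda(p) x(p)$ subject to $\sum_{p \in \mathcal{A}} n_p(\gamma) x(p) \le n(\gamma)$ for all $\gamma \in \Gamma$ and $x(p) \in \{0, 1, \ldots, n\}$, where $n_p(\gamma)$ is the number of occurrences of type $\gamma$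 in signature $p$ and $\lambda(p)$ is the number of non-altruistic types in $p$. -/
/-!
Adjacency and altruism depend only on vertex types, so a list of vertices is a feasible path
(cycle) exactly when it has no repeated vertex and its type sequence is a realizable path (cycle)
signature. A disjoint family of feasible lists therefore yields a multiset of signatures using each
type `γ` at most `n γ` times and with the same number of non-altruistic entries. Conversely, given
such a multiset, pick distinct vertices realizing the concatenation of its signatures (possible by
the capacity bound) and cut the resulting vertex list back into pieces of the right lengths.
-/

variable {V Γ : Type*}

/-- A realizable path signature: type-sequence of a path starting at an altruistic
type, with at most `ℓp` edges. -/
def SigPath (E : Γ → Γ → Prop) (Balt : Γ → Prop) (ℓp : ℕ) (p : List Γ) : Prop :=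
  p ≠ [] ∧ p.Chain' E ∧ (∃ γ, p.head? = some γ ∧ Balt γ) ∧
    (∀ γ ∈ p.tail, ¬ Balt γ) ∧ p.length ≤ ℓp + 1

/-- A realizable cycle signature: type-sequence of a cycle of non-altruistic types,
with at most `ℓc` edges. -/
def SigCycle (E : Γ → Γ → Prop) (Balt : Γ → Prop) (ℓc : ℕ) (p : List Γ) : Prop :=
  2 ≤ p.length ∧ p.Chain' E ∧ (∃ γ δ, p.head? = some γ ∧ p.getLast? = some δ ∧ E δ γ) ∧
    (∀ γ ∈ p, ¬ Balt γ) ∧ p.length ≤ ℓc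

/-- A feasible path of the graph: starts at an altruistic vertex, the rest are
non-altruistic, at most `ℓp` edges. -/
def GFeasPath (A : V → V → Prop) (B : Set V) (ℓp : ℕ) (l : List V) : Prop :=
  l ≠ [] ∧ l.Nodup ∧ l.Chain' A ∧ (∃ x, l.head? = some x ∧ x ∈ B) ∧
    (∀ x ∈ l.tail, x ∉ B) ∧ l.length ≤ ℓp + 1

/-- A feasible cycle of the graph: a directed cycle of non-altruistic vertices with
at most `ℓc` edges. -/
def GFeasCycle (A : V → V → Prop) (B : Set V) (ℓc : ℕ) (l : List V) : Prop :=
  2 ≤ l.length ∧ l.Nodup ∧ l.Chain' A ∧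
    (∃ x y, l.head? = some x ∧ l.getLast? = some y ∧ A y x) ∧
    (∀ x ∈ l, x ∉ B) ∧ l.length ≤ ℓc


open Finset

instance List.instSymmDisjoint {α : Type*} : Std.Symm (@List.Disjoint α) :=
  ⟨fun _ _ h => h.symm⟩

theorem List.Subperm.exists_map_eq {α β : Type*} {f : α → β} {J : List β} {L : List α}
    (h : J.Subperm (L.map f)) : ∃ K : List α, K.Subperm L ∧ K.map f = J := by
  obtain ⟨J', hJ', hsub⟩ := h
  obtain ⟨K', hK', rfl⟩ := List.sublist_map_iff.1 hsub
  obtain ⟨K, rfl, hK⟩ : Relation.Comp (· = List.map f ·) List.Perm J K' := by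
    rw [List.eq_map_comp_perm]
    exact hJ'.symm
  exact ⟨K, hK.subperm.trans hK'.subperm, rfl⟩

theorem List.exists_nodup_map_eq_of_count_le {α β : Type*} [DecidableEq β] {f : α → β}
    (s : Finset α) (J : List β) (h : ∀ b, J.count b ≤ #{a ∈ s | f a = b}) :
    ∃ K : List α, K.Nodup ∧ K.map f = J := by
  rcases s with ⟨⟨L⟩, hL⟩
  have hJ : J.Subperm (L.map f) := by
    rw [← Multiset.coe_le, ← Multiset.map_coe, Multiset.le_iff_count]
    intro b
    rw [Multiset.coe_count, Multiset.count_map]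
    refine (h b).trans_eq ?_
    simp only [eq_comm]
    rfl
  obtain ⟨K, ⟨K', hK'K, hK'L⟩, rfl⟩ := hJ.exists_map_eq
  exact ⟨K, hK'K.nodup_iff.1 (hL.sublist hK'L), rfl⟩

theorem List.exists_flatten_eq_of_map_eq_flatten {α β : Type*} {f : α → β} :
    ∀ {L : List (List β)} {K : List α}, K.map f = L.flatten →
      ∃ KS : List (List α), KS.flatten = K ∧ KS.map (List.map f) = L
  | [], _, hK => ⟨[], by simpa using hK, rfl⟩
  | _ :: _, _, hK => by
    obtain ⟨K₁, K₂, rfl, rfl, h₂⟩ := List.map_eq_append_iff.1 hK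
    obtain ⟨KS, rfl, rfl⟩ := exists_flatten_eq_of_map_eq_flatten h₂
    exact ⟨K₁ :: KS, rfl, rfl⟩

theorem List.nodup_of_pairwise_disjoint {α : Type*} {L : List (List α)}
    (hL : L.Pairwise List.Disjoint) (hne : ∀ l ∈ L, l ≠ []) : L.Nodup := by
  refine hL.imp_of_mem fun {l _} hl _ hdisj hll' => ?_
  subst hll'
  obtain ⟨x, hx⟩ := List.exists_mem_of_ne_nil l (hne l hl)
  exact hdisj hx hx

theorem Finset.card_filter_biUnion_toFinset {α : Type*} [DecidableEq α] {S : Finset (List α)}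
    (hnd : ∀ l ∈ S, l.Nodup) (hdisj : (S : Set (List α)).Pairwise List.Disjoint)
    (p : α → Prop) [DecidablePred p] :
    #{x ∈ S.biUnion List.toFinset | p x} = ∑ l ∈ S, l.countP (p ·) := by
  rw [filter_biUnion, card_biUnion]
  · refine sum_congr rfl fun l hl => ?_
    rw [List.countP_eq_length_filter, ← List.toFinset_card_of_nodup ((hnd l hl).filter _)]
    congr 1
    ext x
    simp
  · intro l hl l' hl' hne
    simp only [Function.onFun, disjoint_left, mem_filter, List.mem_toFinset]
    exact fun x hx hx' => hdisj hl hl' hne hx.1 hx'.1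

section TypeLift

variable {τ : V → Γ}

theorem sum_countP_map_map_val [DecidableEq V] {S : Finset (List V)}
    (hnd : ∀ l ∈ S, l.Nodup) (hdisj : (S : Set (List V)).Pairwise List.Disjoint)
    (q : Γ → Prop) [DecidablePred q] :
    ((S.val.map (List.map τ)).map fun p => p.countP (q ·)).sum =
      #{x ∈ S.biUnion List.toFinset | q (τ x)} := by
  rw [card_filter_biUnion_toFinset hnd hdisj, Multiset.map_map, Finset.sum_eq_multiset_sum]
  simp only [Function.comp_def, List.countP_map]

theorem sum_count_map_map_val_le [Fintype V] [DecidableEq V] [DecidableEq Γ]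
    {S : Finset (List V)} (hnd : ∀ l ∈ S, l.Nodup)
    (hdisj : (S : Set (List V)).Pairwise List.Disjoint) (γ : Γ) :
    ((S.val.map (List.map τ)).map fun p => p.count γ).sum ≤ #{u | τ u = γ} := by
  exact (sum_countP_map_map_val hnd hdisj (· = γ)).trans_le
    (card_le_card (filter_subset_filter _ (subset_univ _)))

theorem exists_finset_pairwise_disjoint_map_val_eq [Fintype V] [DecidableEq Γ]
    (s : Multiset (List Γ)) (hne : ∀ p ∈ s, p ≠ [])
    (hcap : ∀ γ, (s.map fun p => p.count γ).sum ≤ #{u | τ u = γ}) :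
    ∃ S : Finset (List V), (∀ l ∈ S, l.Nodup) ∧
      (S : Set (List V)).Pairwise List.Disjoint ∧ S.val.map (List.map τ) = s := by
  rcases s with ⟨L⟩
  obtain ⟨K, hK, hKL⟩ := List.exists_nodup_map_eq_of_count_le univ L.flatten fun γ => by
    simpa [List.count_flatten] using hcap γ
  obtain ⟨KS, rfl, rfl⟩ := List.exists_flatten_eq_of_map_eq_flatten hKL
  obtain ⟨hnd, hdisj⟩ := List.nodup_flatten.1 hK
  have hKS : KS.Nodup := List.nodup_of_pairwise_disjoint hdisj fun l hl hl0 =>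
    hne _ (Multiset.mem_coe.2 (List.mem_map_of_mem hl)) (by simp [hl0])
  exact ⟨⟨KS, hKS⟩, hnd, fun _ hl _ hl' => hdisj.forall hl hl', rfl⟩

end TypeLift

section Signatures

variable {E : Γ → Γ → Prop} {Balt : Γ → Prop} {τ : V → Γ} {ℓ : ℕ}

theorem SigPath.ne_nil {p : List Γ} (h : SigPath E Balt ℓ p) : p ≠ [] := h.1

theorem SigCycle.ne_nil {p : List Γ} (h : SigCycle E Balt ℓ p) : p ≠ [] :=
  List.ne_nil_of_length_pos (by have := h.1; omega)

theorem gFeasPath_comap_iff {l : List V} :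
    GFeasPath (fun u v => E (τ u) (τ v)) {u | Balt (τ u)} ℓ l ↔
      l.Nodup ∧ SigPath E Balt ℓ (l.map τ) := by
  simp only [GFeasPath, SigPath, List.Chain', List.isChain_map, List.length_map, ← List.map_tail,
    List.forall_mem_map, Set.mem_ofPred_eq, List.head?_map, Option.map_eq_some_iff, ne_eq,
    List.map_eq_nil_iff, exists_exists_and_eq_and]
  exact and_left_comm

theorem gFeasCycle_comap_iff {l : List V} :
    GFeasCycle (fun u v => E (τ u) (τ v)) {u | Balt (τ u)} ℓ l ↔
      l.Nodup ∧ SigCycle E Balt ℓ (l.map τ) := by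
  simp only [GFeasCycle, SigCycle, List.Chain', List.isChain_map, List.length_map,
    List.forall_mem_map, Set.mem_ofPred_eq, List.head?_map, List.getLast?_map,
    Option.map_eq_some_iff]
  rw [and_left_comm]
  simp

end Signatures

theorem stmt13_general [Fintype V] [DecidableEq V] [DecidableEq Γ]
    (E : Γ → Γ → Prop) (Balt : Γ → Prop) [DecidablePred Balt]
    (hE : ∀ γ, ¬ E γ γ)
    (τ : V → Γ) (A : V → V → Prop)
    (hA : ∀ u v, A u v ↔ u ≠ v ∧ E (τ u) (τ v))
    (B : Set V) (hB : ∀ u, u ∈ B ↔ Balt (τ u))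
    (ℓp ℓc : ℕ)
    (n : Γ → ℕ) (hn : ∀ γ, n γ = (Finset.univ.filter fun u => τ u = γ).card)
    (m : ℕ) :
    (∃ S : Finset (List V),
        (∀ l ∈ S, GFeasPath A B ℓp l ∨ GFeasCycle A B ℓc l) ∧
        (∀ l ∈ S, ∀ l' ∈ S, l ≠ l' → ∀ x ∈ l, x ∉ l') ∧
        m ≤ ((S.biUnion List.toFinset).filter fun x => ¬ Balt (τ x)).card) ↔
    (∃ s : Multiset (List Γ),
        (∀ p ∈ s, (SigPath E Balt ℓp p ∨ SigCycle E Balt ℓc p) ∧ ∀ γ, p.count γ ≤ n γ) ∧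
        (∀ γ, (s.map fun p => p.count γ).sum ≤ n γ) ∧
        m ≤ (s.map fun p => p.countP fun γ => decide (¬ Balt γ)).sum) := by
  -- `E` is irreflexive, so the condition `u ≠ v` in `A` is automatic.
  obtain rfl : A = fun u v => E (τ u) (τ v) := by
    ext u v
    exact (hA u v).trans ⟨And.right, fun h => ⟨fun huv => hE _ (huv ▸ h), h⟩⟩
  obtain rfl : B = {u | Balt (τ u)} := Set.ext hB
  simp only [gFeasPath_comap_iff, gFeasCycle_comap_iff, ← and_or_left]
  constructor
  · rintro ⟨S, hS, hdisj, hm⟩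
    have hnd l (hl : l ∈ S) : l.Nodup := (hS l hl).1
    have hcap (γ : Γ) := hn γ ▸ sum_count_map_map_val_le hnd hdisj γ
    refine ⟨S.val.map (List.map τ), fun p hp => ⟨?_, fun γ => ?_⟩, hcap, ?_⟩
    · obtain ⟨l, hl, rfl⟩ := Multiset.mem_map.1 hp
      exact (hS l hl).2
    · exact (Multiset.le_sum_of_mem (Multiset.mem_map_of_mem _ hp)).trans (hcap γ)
    · rwa [sum_countP_map_map_val hnd hdisj]
  · rintro ⟨s, hs, hcap, hm⟩
    obtain ⟨S, hnd, hdisj, rfl⟩ := exists_finset_pairwise_disjoint_map_val_eq s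
      (fun p hp => (hs p hp).1.elim SigPath.ne_nil SigCycle.ne_nil) (fun γ => hn γ ▸ hcap γ)
    refine ⟨S, fun l hl => ⟨hnd l hl, (hs _ (Multiset.mem_map_of_mem _ hl)).1⟩, hdisj, ?_⟩
    rwa [sum_countP_map_map_val hnd hdisj] at hm

/-- The optimum of the kidney exchange problem on a digraph whose adjacency, and
altruism, are determined by vertex types (with complete bipartite edges between type
classes) equals the optimum of the type-signature integer program: `m` non-altruistic
vertices are coverable by disjoint feasible paths/cycles iff a capacity-feasible
integer assignment of realizable signatures attains `λ`-value at least `m`. -/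
theorem stmt13 [Fintype V] [DecidableEq V] [DecidableEq Γ]
    (E : Γ → Γ → Prop) (Balt : Γ → Prop) [DecidablePred Balt]
    (hE : ∀ γ, ¬ E γ γ)
    (τ : V → Γ) (A : V → V → Prop)
    (hA : ∀ u v, A u v ↔ u ≠ v ∧ E (τ u) (τ v))
    (B : Set V) (hB : ∀ u, u ∈ B ↔ Balt (τ u))
    (ℓp ℓc : ℕ) (hℓ : ℓp ≤ ℓc)
    (n : Γ → ℕ) (hn : ∀ γ, n γ = (Finset.univ.filter fun u => τ u = γ).card)
    (m : ℕ) :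
    (∃ S : Finset (List V),
        (∀ l ∈ S, GFeasPath A B ℓp l ∨ GFeasCycle A B ℓc l) ∧
        (∀ l ∈ S, ∀ l' ∈ S, l ≠ l' → ∀ x ∈ l, x ∉ l') ∧
        m ≤ ((S.biUnion List.toFinset).filter fun x => ¬ Balt (τ x)).card) ↔
    (∃ s : Multiset (List Γ),
        (∀ p ∈ s, (SigPath E Balt ℓp p ∨ SigCycle E Balt ℓc p) ∧ ∀ γ, p.count γ ≤ n γ) ∧
        (∀ γ, (s.map fun p => p.count γ).sum ≤ n γ) ∧
        m ≤ (s.map fun p => p.countP fun γ => decide (¬ Balt γ)).sum) :=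
  stmt13_general E Balt hE τ A hA B hB ℓp ℓc n hn m
end

section
/- In a digraph with vertex types, if a collection $C$ of directed paths and cycles is a subgraph of $G$, then defining $x(p)$ for each signature $p$ as the number of elements of $C$ with signature $p$, one has $\sum_p n_p(\gamma)\, x(p) \le n(\gamma)$ for every type $\gamma$, and $\sum_p \lambda(p)\, x(p)$ equals the total number of non-altruistic vertices covered by $C$, where the paths/cycles in $C$ are vertex-disjoint. -/
variable {V Γ : Type*}

open Finset

theorem Finset.sum_image_mul_card_fiber {α β : Type*} [DecidableEq β] (s : Finset α) (f : α → β)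
    (g : β → ℕ) : ∑ b ∈ s.image f, g b * #{a ∈ s | f a = b} = ∑ a ∈ s, g (f a) := by
  simp only [sum_comp g f, smul_eq_mul, mul_comm]

theorem sum_countP_eq_card_filter_biUnion {α : Type*} [DecidableEq α] (C : Finset (List α))
    (hnd : ∀ l ∈ C, l.Nodup) (hdisj : ∀ l ∈ C, ∀ l' ∈ C, l ≠ l' → ∀ x ∈ l, x ∉ l')
    (P : α → Prop) [DecidablePred P] :
    ∑ l ∈ C, l.countP P = #{x ∈ C.biUnion List.toFinset | P x} := by
  rw [filter_biUnion, card_biUnion]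
  · exact sum_congr rfl fun l hl => ((hnd l hl).card_eq_countP).symm
  · intro l hl l' hl' hne
    simp only [Function.onFun, disjoint_left, mem_filter, List.mem_toFinset]
    exact fun x hx hx' => hdisj l hl l' hl' hne x hx.1 hx'.1

/-- Mapping a vertex-disjoint collection `C` of paths and cycles to the signature
counts `x(p) = #{q ∈ C : signature q = p}` satisfies the type-capacity constraints,
and the `λ`-weighted total equals the number of covered non-altruistic vertices. -/
theorem stmt15 [Fintype V] [DecidableEq V] [DecidableEq Γ]
    (A : V → V → Prop) (τ : V → Γ) (Balt : Γ → Prop) [DecidablePred Balt]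
    (n : Γ → ℕ) (hn : ∀ γ, n γ = (Finset.univ.filter fun u => τ u = γ).card)
    (C : Finset (List V))
    (hfeas : ∀ l ∈ C, l ≠ [] ∧ (IsDiPath A l ∨ IsDiCycle A l))
    (hdisj : ∀ l ∈ C, ∀ l' ∈ C, l ≠ l' → ∀ x ∈ l, x ∉ l') :
    (∀ γ : Γ, ∑ p ∈ C.image (List.map τ),
        p.count γ * (C.filter fun q => q.map τ = p).card ≤ n γ) ∧
    ∑ p ∈ C.image (List.map τ),
        (p.countP fun γ => decide (¬ Balt γ)) * (C.filter fun q => q.map τ = p).card =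
      ((C.biUnion List.toFinset).filter fun x => ¬ Balt (τ x)).card := by
  have hnd : ∀ l ∈ C, l.Nodup := fun l hl => (hfeas l hl).2.elim (·.1) (·.2.1)
  refine ⟨fun γ => ?_, ?_⟩
  · calc _ = ∑ l ∈ C, l.countP (fun x => τ x = γ) := by
          simp only [sum_image_mul_card_fiber, List.count_eq_countP, List.countP_map]
          rfl
      _ = #{x ∈ C.biUnion List.toFinset | τ x = γ} :=
          sum_countP_eq_card_filter_biUnion C hnd hdisj _
      _ ≤ n γ := hn γ ▸ card_le_card (filter_subset_filter _ (subset_univ _))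
  · rw [sum_image_mul_card_fiber, ← sum_countP_eq_card_filter_biUnion C hnd hdisj]
    simp only [List.countP_map]
    rfl
end
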